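/- arXiv:1801.07965 — 2 statements merged into one kernel-verified Lean document; each statement's English description precedes it below -/
import Mathlib

section
/- Let F be a field, let n ≥ 2, let x₁, …, xₙ be pairwise distinct elements of F, and let t be an integer with 1 ≤ t ≤ n−1. Let p be a polynomial over F of degree at most t−1 and let f be a polynomial over F of degree at most n−t−1. Define c⊥ᵢ = f(xᵢ) · ∏_{j ≠ i} (xᵢ − xⱼ)⁻¹ for each i. Then Σ_{i=1}^{n} c⊥ᵢ · p(xᵢ) = 0. -/
/-!
The map `P ↦ ∑ᵢ P(xᵢ) ∏_{j ≠ i} (xᵢ - xⱼ)⁻¹` reads off the coefficient of `X^(n-1)` of the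
Lagrange interpolant of `P` at the `n` nodes. For `P = f * p` of degree at most `n - 2` the
interpolant is `P` itself, whose coefficient of `X^(n-1)` vanishes.
-/

open Polynomial Finset

namespace Lagrange

theorem sum_eval_mul_nodalWeight_eq_zero {F ι : Type*} [Field F] [DecidableEq ι]
    {s : Finset ι} {v : ι → F} (hvs : Set.InjOn v s) {P : F[X]}
    (hP : P.degree < ↑(#s - 1)) :
    ∑ i ∈ s, P.eval (v i) * nodalWeight s v i = 0 := by
  have hP' : P.degree < #s := hP.trans_le (by exact_mod_cast Nat.sub_le _ _)
  calc ∑ i ∈ s, P.eval (v i) * nodalWeight s v i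
      = ∑ i ∈ s, P.eval (v i) / ∏ j ∈ s.erase i, (v i - v j) := by
        simp only [nodalWeight, prod_inv_distrib, div_eq_mul_inv]
    _ = P.coeff (#s - 1) := (coeff_eq_sum hvs hP').symm
    _ = 0 := coeff_eq_zero_of_degree_lt hP

end Lagrange

theorem stmt_14_general {F : Type*} [Field F] (n : ℕ)
    (x : Fin n → F) (hx : Function.Injective x)
    (t : ℕ) (ht1 : 1 ≤ t) (ht2 : t ≤ n - 1)
    (p f : Polynomial F)
    (hp : p.degree ≤ (t - 1 : ℕ)) (hf : f.degree ≤ (n - t - 1 : ℕ)) :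
    ∑ i, (f.eval (x i) * ∏ j ∈ Finset.univ.erase i, (x i - x j)⁻¹) * p.eval (x i) = 0 := by
  have hdeg : (f * p).degree < ↑(#(univ : Finset (Fin n)) - 1) :=
    calc (f * p).degree ≤ f.degree + p.degree := degree_mul_le _ _
      _ ≤ ↑(n - t - 1) + ↑(t - 1) := add_le_add hf hp
      _ < ↑(#(univ : Finset (Fin n)) - 1) := by
        rw [card_univ, Fintype.card_fin]; exact_mod_cast (by omega)
  rw [← Lagrange.sum_eval_mul_nodalWeight_eq_zero hx.injOn hdeg]
  refine sum_congr rfl fun i _ => ?_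
  rw [eval_mul, Lagrange.nodalWeight]
  ring

/-- Orthogonality of the Reed–Solomon code for `(n,t)`-Shamir secret sharing with its dual:
for pairwise distinct `x₁, …, xₙ` in a field `F`, `1 ≤ t ≤ n − 1`, `p` of degree `≤ t − 1`,
`f` of degree `≤ n − t − 1`, and `c⊥ᵢ = f(xᵢ)·∏_{j ≠ i}(xᵢ − xⱼ)⁻¹`, one has
`Σᵢ c⊥ᵢ·p(xᵢ) = 0`. -/
theorem stmt_14 {F : Type*} [Field F] (n : ℕ) (hn : 2 ≤ n)
    (x : Fin n → F) (hx : Function.Injective x)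
    (t : ℕ) (ht1 : 1 ≤ t) (ht2 : t ≤ n - 1)
    (p f : Polynomial F)
    (hp : p.degree ≤ (t - 1 : ℕ)) (hf : f.degree ≤ (n - t - 1 : ℕ)) :
    ∑ i, (f.eval (x i) * ∏ j ∈ Finset.univ.erase i, (x i - x j)⁻¹) * p.eval (x i) = 0 :=
  stmt_14_general n x hx t ht1 ht2 p f hp hf
end

section
/- Let q be a prime and let G be a finite commutative group of cardinality q. Let g, h, y₁, y₂, a₁, a₂ ∈ G, and suppose there are integers e, e′, z, z′ such that e ≢ e′ (mod q), g^z = a₁ · y₁^e, h^z = a₂ · y₂^e, g^{z′} = a₁ · y₁^{e′}, and h^{z′} = a₂ · y₂^{e′}. Then there exists a natural number x such that y₁ = g^x and y₂ = h^x. -/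
/-!
Dividing the two verification equations of each base cancels the commitment:
`y₁ ^ (e - e') = g ^ (z - z')` and `y₂ ^ (e - e') = h ^ (z - z')`. Since `q` is prime and
`q ∤ e - e'`, a Bézout relation `u (e - e') + v q = 1` holds, and every element of `G` has
order dividing `q`; raising both equations to the power `u` gives `y₁ = g ^ x`, `y₂ = h ^ x`
with the same exponent `x = (z - z') u`, which may be reduced modulo `q`.
-/

theorem zpow_sub_eq_zpow_sub_of_eq_mul_zpow {G : Type*} [CommGroup G] {g y a : G}
    {e e' z z' : ℤ} (h : g ^ z = a * y ^ e) (h' : g ^ z' = a * y ^ e') :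
    y ^ (e - e') = g ^ (z - z') := by
  rw [zpow_sub, zpow_sub, h, h', ← div_eq_mul_inv, ← div_eq_mul_inv, mul_div_mul_left_eq_div]

theorem eq_zpow_mul_of_zpow_eq_of_bezout {G : Type*} [Group G] {g y : G} {k m n u v : ℤ}
    (hn : y ^ n = 1) (huv : u * k + v * n = 1) (hy : y ^ k = g ^ m) :
    y = g ^ (m * u) := by
  calc y = y ^ (u * k + v * n) := by rw [huv, zpow_one]
    _ = (y ^ k) ^ u * (y ^ n) ^ v := by rw [zpow_add, mul_comm u, mul_comm v, zpow_mul, zpow_mul]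
    _ = g ^ (m * u) := by rw [hy, hn, one_zpow, mul_one, zpow_mul]

theorem zpow_eq_pow_toNat_emod_card {G : Type*} [Group G] [Fintype G] (a : G) (m : ℤ) :
    a ^ m = a ^ (m % Fintype.card G).toNat := by
  rw [← zpow_natCast, Int.toNat_of_nonneg (Int.emod_nonneg m (by exact_mod_cast
    Fintype.card_ne_zero)), zpow_mod_card]

/-- Special soundness of the DLEQ sigma protocol in a group of prime order `q`: two
accepting transcripts `(a₁, a₂, e, z)` and `(a₁, a₂, e′, z′)` with `e ≢ e′ (mod q)`
determine a common discrete logarithm `x` with `y₁ = g^x` and `y₂ = h^x`. -/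
theorem stmt_15 (q : ℕ) (hq : q.Prime) {G : Type*} [CommGroup G] [Fintype G]
    (hcard : Fintype.card G = q)
    (g h y₁ y₂ a₁ a₂ : G) (e e' z z' : ℤ)
    (hne : ¬ ((q : ℤ) ∣ (e - e')))
    (h1 : g ^ z = a₁ * y₁ ^ e) (h2 : h ^ z = a₂ * y₂ ^ e)
    (h3 : g ^ z' = a₁ * y₁ ^ e') (h4 : h ^ z' = a₂ * y₂ ^ e') :
    ∃ x : ℕ, y₁ = g ^ x ∧ y₂ = h ^ x := by
  obtain ⟨u, v, huv⟩ : IsCoprime (e - e') (q : ℤ) :=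
    ((Nat.prime_iff_prime_int.mp hq).coprime_iff_not_dvd.mpr hne).symm
  have hord (y : G) : y ^ (q : ℤ) = 1 := by
    rw [zpow_natCast, ← hcard, pow_card_eq_one]
  have hy₁ := eq_zpow_mul_of_zpow_eq_of_bezout (hord y₁) huv
    (zpow_sub_eq_zpow_sub_of_eq_mul_zpow h1 h3)
  have hy₂ := eq_zpow_mul_of_zpow_eq_of_bezout (hord y₂) huv
    (zpow_sub_eq_zpow_sub_of_eq_mul_zpow h2 h4)
  exact ⟨_, hy₁.trans (zpow_eq_pow_toNat_emod_card _ _),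
    hy₂.trans (zpow_eq_pow_toNat_emod_card _ _)⟩
end
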